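/- If SG(A, n, p) is a stride generator, then for every i with 0 ≤ i ≤ p there exists a natural number e with e ≤ n + i (so the thread T(e, i) has positive length) such that a_3 − a_2 ≤ e*a_2 − i*a_3 < a_3; that is, every order i ≤ p is realized by a thread whose start lies in [a_3 − a_2, a_3). -/

import Mathlib

/-- `x` has an `n`-generation of order `i` (w.r.t. the basis `{1, a2, a3}`). -/
def HasGen (a2 a3 : ℤ) (n i : ℕ) (x : ℤ) : Prop :=
  ∃ c1 c2 : ℕ, x + (i : ℤ) * a3 = (c2 : ℤ) * a2 + (c1 : ℤ) ∧ c1 + c2 ≤ n + i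

/-- `SG(A, n, p)` is a stride generator. -/
def IsSG (a2 a3 : ℤ) (n p : ℕ) : Prop :=
  (∀ x : ℤ, 0 ≤ x → x < a3 → ∃ i : ℕ, i ≤ p ∧ HasGen a2 a3 n i x) ∧
  (∃ x : ℤ, 0 ≤ x ∧ x < a3 ∧ ∀ i : ℕ, i < p → ¬ HasGen a2 a3 n i x) ∧
  (∃ y : ℤ, 0 ≤ y ∧ y < a3 ∧ ∀ i : ℕ, i ≤ p + 1 → ¬ HasGen a2 a3 (n - 1) i y)

/-- `y` is a break of the stride generator `SG(A, n, p)`. -/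
def IsBreak (a2 a3 : ℤ) (n p : ℕ) (y : ℤ) : Prop :=
  0 ≤ y ∧ y < a3 ∧ ∀ i : ℕ, i ≤ p + 1 → ¬ HasGen a2 a3 (n - 1) i y

/-- `y` is a canonical break: it has no `(n-1)`-generation of any order. -/
def IsCanonicalBreak (a2 a3 : ℤ) (n : ℕ) (y : ℤ) : Prop :=
  ∀ i : ℕ, ¬ HasGen a2 a3 (n - 1) i y

/-- `y` has break order `q`: `q` is the smallest order of an `(n-1)`-generation of `y`. -/
def HasBreakOrder (a2 a3 : ℤ) (n : ℕ) (y : ℤ) (q : ℕ) : Prop :=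
  HasGen a2 a3 (n - 1) q y ∧ ∀ i : ℕ, i < q → ¬ HasGen a2 a3 (n - 1) i y

/-- A canonical stride generator: all of its breaks are canonical. -/
def IsCanonicalSG (a2 a3 : ℤ) (n p : ℕ) : Prop :=
  IsSG a2 a3 n p ∧ ∀ y : ℤ, IsBreak a2 a3 n p y → IsCanonicalBreak a2 a3 n y

/-- A fundamental stride generator: no stride generator for `A` has larger `n`. -/
def IsFundamentalSG (a2 a3 : ℤ) (n p : ℕ) : Prop :=
  IsSG a2 a3 n p ∧ ∀ n' p' : ℕ, IsSG a2 a3 n' p' → n' ≤ n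

/-- Start of the thread `T(e, i)`. -/
def thrStr (a2 a3 : ℤ) (e i : ℕ) : ℤ := (e : ℤ) * a2 - (i : ℤ) * a3

/-- End of the thread `T(e, i)` (for parameter `n`). -/
def thrEnd (a2 a3 : ℤ) (n e i : ℕ) : ℤ := thrStr a2 a3 e i + ((n : ℤ) + (i : ℤ)) - (e : ℤ)

/-- The value `x` is covered by the thread `T(e, i)`. -/
def ThrCoversVal (a2 a3 : ℤ) (n e i : ℕ) (x : ℤ) : Prop :=
  thrStr a2 a3 e i ≤ x ∧ x ≤ thrEnd a2 a3 n e i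

/-- The thread `T(e1, i1)` covers the thread `T(e2, i2)`. -/
def ThrCoversThr (a2 a3 : ℤ) (n e1 i1 e2 i2 : ℕ) : Prop :=
  thrStr a2 a3 e1 i1 ≤ thrStr a2 a3 e2 i2 ∧ thrEnd a2 a3 n e2 i2 ≤ thrEnd a2 a3 n e1 i1

/-- The thread `T(e, i)` has positive length and appears in the diagram:
it covers at least one value in `[0, a3)`. -/
def ThrAppears (a2 a3 : ℤ) (n e i : ℕ) : Prop :=
  e ≤ n + i ∧ ∃ x : ℤ, 0 ≤ x ∧ x < a3 ∧ ThrCoversVal a2 a3 n e i x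

/-- `x` has an `h`-representation with respect to the basis `{1, a2, a3}`. -/
def HasRep (a2 a3 : ℤ) (h : ℕ) (x : ℤ) : Prop :=
  ∃ c1 c2 c3 : ℕ, x = (c3 : ℤ) * a3 + (c2 : ℤ) * a2 + (c1 : ℤ) ∧ c1 + c2 + c3 ≤ h

/-- `X` is the `h`-range: every `0 ≤ x ≤ X` has an `h`-representation and `X + 1` does not. -/
def IsHRange (a2 a3 : ℤ) (h : ℕ) (X : ℤ) : Prop :=
  0 ≤ X ∧ (∀ x : ℤ, 0 ≤ x → x ≤ X → HasRep a2 a3 h x) ∧ ¬ HasRep a2 a3 h (X + 1)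


/-! Let `x₀ ∈ [0, a₃)` have no `n`-generation of order `< p`. Lowering `x` by `a₂` preserves
generations, so raising `x₀` by multiples of `a₂` into `[a₃ - a₂, a₃)` keeps that property, and by
(A) the raised value `x₁` has a generation of order exactly `p`. Then
`(p + 1) a₃ - a₂ ≤ x₁ + p a₃ ≤ (n + p) a₂`, i.e. `(p + 1) a₃ ≤ (n + p + 1) a₂`, which persists for
every `i ≤ p` because `a₂ < a₃`. The largest multiple `e a₂` below `(i + 1) a₃` is then the start
of the required thread. -/

theorem Int.exists_nat_mul_mem_Ico {a m : ℤ} (ha : 0 < a) (hm : 0 < m) :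
    ∃ q : ℕ, m - a ≤ q * a ∧ q * a < m := by
  have hq : 0 ≤ (m - 1) / a := Int.ediv_nonneg (by omega) ha.le
  refine ⟨((m - 1) / a).toNat, ?_, ?_⟩ <;> rw [Int.toNat_of_nonneg hq]
  · linarith [Int.lt_ediv_add_one_mul_self (m - 1) ha]
  · linarith [Int.ediv_mul_le (m - 1) ha.ne']

section

variable {a2 a3 : ℤ} {n i : ℕ} {x : ℤ}

theorem HasGen.of_add (ha2 : 0 ≤ a2) (h : HasGen a2 a3 n i (x + a2)) (hx : 0 ≤ x + i * a3) :
    HasGen a2 a3 n i x := by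
  obtain ⟨c1, c2, heq, hle⟩ := h
  rcases c2 with _ | c2
  · refine ⟨(x + i * a3).toNat, 0, by simp [Int.toNat_of_nonneg hx], ?_⟩
    have : x + i * a3 ≤ c1 := by push_cast at heq; linarith
    omega
  · exact ⟨c1, c2, by push_cast at heq; linarith, by omega⟩

theorem HasGen.of_add_mul (ha2 : 0 ≤ a2) (k : ℕ) (h : HasGen a2 a3 n i (x + k * a2))
    (hx : 0 ≤ x + i * a3) : HasGen a2 a3 n i x := by
  induction k with
  | zero => simpa using h
  | succ k ih =>
    refine ih (HasGen.of_add ha2 ?_ ?_)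
    · simpa [add_mul, add_assoc] using h
    · nlinarith

theorem HasGen.add_mul_le (ha2 : 1 ≤ a2) (h : HasGen a2 a3 n i x) :
    x + i * a3 ≤ (n + i) * a2 := by
  obtain ⟨c1, c2, heq, hle⟩ := h
  have hle' : (c1 : ℤ) + c2 ≤ n + i := by exact_mod_cast hle
  nlinarith [Int.natCast_nonneg c1]

theorem IsSG.succ_mul_le (ha2 : 1 < a2) (ha3 : a2 < a3) {p : ℕ} (hsg : IsSG a2 a3 n p) :
    ((p : ℤ) + 1) * a3 ≤ (n + p + 1) * a2 := by
  obtain ⟨hgen, ⟨x0, hx0, hx0a3, hx0no⟩, -⟩ := hsg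
  obtain ⟨k, hk, hka3⟩ := Int.exists_nat_mul_mem_Ico (by omega : 0 < a2) (by omega : 0 < a3 - x0)
  have hx1no : ∀ j < p, ¬ HasGen a2 a3 n j (x0 + k * a2) := fun j hj h =>
    hx0no j hj (h.of_add_mul (by omega) k (by nlinarith [Int.natCast_nonneg j]))
  obtain ⟨j, hjp, hj⟩ := hgen (x0 + k * a2) (by nlinarith [Int.natCast_nonneg k]) (by linarith)
  obtain rfl : j = p := hjp.lt_or_eq.resolve_left fun hlt => hx1no j hlt hj
  linarith [hj.add_mul_le ha2.le]

end

/-- Lemma 3: all threads of order `i ≤ p` exist; each such order is realized by a thread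
whose start lies in `[a3 - a2, a3)`. -/
theorem stmt8 (a2 a3 : ℤ) (ha2 : 1 < a2) (ha3 : a2 < a3)
    (n p : ℕ) (hsg : IsSG a2 a3 n p) :
    ∀ i : ℕ, i ≤ p → ∃ e : ℕ, e ≤ n + i ∧
      a3 - a2 ≤ (e : ℤ) * a2 - (i : ℤ) * a3 ∧ (e : ℤ) * a2 - (i : ℤ) * a3 < a3 := by
  intro i hi
  have hbound : ((i : ℤ) + 1) * a3 ≤ (n + i + 1) * a2 := by
    have hip : (i : ℤ) ≤ p := by exact_mod_cast hi
    nlinarith [hsg.succ_mul_le ha2 ha3]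
  obtain ⟨e, he, hea3⟩ := Int.exists_nat_mul_mem_Ico (a := a2) (m := (i + 1) * a3) (by omega)
    (by nlinarith [Int.natCast_nonneg i])
  refine ⟨e, ?_, by linarith, by linarith⟩
  have : (e : ℤ) < n + i + 1 := lt_of_mul_lt_mul_right (hea3.trans_le hbound) (by omega)
  omega
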